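/- arXiv:2207.03756 — 4 statements merged into one kernel-verified Lean document; each statement's English description precedes it below -/
import Mathlib

section
/- If P is a Funk function of the Minkowski spray G = 0 on R^n and Q is a smooth function satisfying Q_{x^k} = (PQ)_{y^k} for all k, then for all m ≥ 1: ∂^m Q/∂x^{i_1}⋯∂x^{i_m} = ∂^m (Q P^m)/∂y^{i_1}⋯∂y^{i_m}. -/
open scoped BigOperators

noncomputable section

/-- A point of the tangent space coordinates: `(x, y)` with `x, y : Fin n → ℝ`. -/
abbrev Pt (n : ℕ) := (Fin n → ℝ) × (Fin n → ℝ)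

/-- Partial derivative in the `x^k` direction. -/
noncomputable def px {n : ℕ} (f : Pt n → ℝ) (k : Fin n) (p : Pt n) : ℝ :=
  fderiv ℝ f p (Pi.single k 1, 0)

/-- Partial derivative in the `y^k` direction. -/
noncomputable def py {n : ℕ} (f : Pt n → ℝ) (k : Fin n) (p : Pt n) : ℝ :=
  fderiv ℝ f p (0, Pi.single k 1)

/-- Horizontal derivative `f_{;k}` with respect to the Berwald connection of the spray `G`. -/
noncomputable def hderiv {n : ℕ} (G : Fin n → Pt n → ℝ) (f : Pt n → ℝ) (k : Fin n)
    (p : Pt n) : ℝ :=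
  px f k p - ∑ r, py (G r) k p * py f r p

/-- `f_{;0} := y^k f_{;k}`. -/
noncomputable def hderiv0 {n : ℕ} (G : Fin n → Pt n → ℝ) (f : Pt n → ℝ) (p : Pt n) : ℝ :=
  ∑ k, p.2 k * hderiv G f k p

/-- Positively 1-homogeneous in `y`. -/
def Homog1 {n : ℕ} (f : Pt n → ℝ) : Prop :=
  ∀ t : ℝ, 0 < t → ∀ p : Pt n, f (p.1, t • p.2) = t * f p

/-- Positively 0-homogeneous in `y`. -/
def Homog0 {n : ℕ} (f : Pt n → ℝ) : Prop :=
  ∀ t : ℝ, 0 < t → ∀ p : Pt n, f (p.1, t • p.2) = f p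

/-- A spray in local coordinates: smooth coefficients, positively 2-homogeneous in `y`. -/
def IsSpray {n : ℕ} (G : Fin n → Pt n → ℝ) : Prop :=
  (∀ r, ContDiff ℝ (⊤ : ℕ∞) (G r)) ∧
    ∀ r, ∀ t : ℝ, 0 < t → ∀ p : Pt n, G r (p.1, t • p.2) = t ^ 2 * G r p

/-- `P` is a Funk function of the spray `G`: `P_{;k} = P P_{y^k}`. -/
def IsFunk {n : ℕ} (G : Fin n → Pt n → ℝ) (P : Pt n → ℝ) : Prop :=
  ∀ (k : Fin n) (p : Pt n), hderiv G P k p = P p * py P k p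

/-- `P` is a Hamel function of the spray `G`: `P_{;k} = (P_{y^k})_{;0}`. -/
def IsHamel {n : ℕ} (G : Fin n → Pt n → ℝ) (P : Pt n → ℝ) : Prop :=
  ∀ (k : Fin n) (p : Pt n), hderiv G P k p = hderiv0 G (fun q => py P k q) p

/-- Iterated partial x-derivatives along a list of indices. -/
noncomputable def pxIter {n : ℕ} (l : List (Fin n)) (f : Pt n → ℝ) : Pt n → ℝ :=
  l.foldr (fun k g => px g k) f

/-- Iterated partial y-derivatives along a list of indices. -/
noncomputable def pyIter {n : ℕ} (l : List (Fin n)) (f : Pt n → ℝ) : Pt n → ℝ :=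
  l.foldr (fun k g => py g k) f

/-- Directional derivative in a constant direction. -/
noncomputable def Dd {n : ℕ} (v : Pt n) (f : Pt n → ℝ) (p : Pt n) : ℝ := fderiv ℝ f p v

lemma px_eq_Dd {n : ℕ} (f : Pt n → ℝ) (k : Fin n) : px f k = Dd (Pi.single k 1, 0) f := rfl

lemma py_eq_Dd {n : ℕ} (f : Pt n → ℝ) (k : Fin n) : py f k = Dd (0, Pi.single k 1) f := rfl

lemma Dd_contDiff {n : ℕ} {f : Pt n → ℝ} (hf : ContDiff ℝ (⊤ : ℕ∞) f) (v : Pt n) :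
    ContDiff ℝ (⊤ : ℕ∞) (Dd v f) :=
  (hf.fderiv_right (by simp)).clm_apply contDiff_const

lemma Dd_swap {n : ℕ} {f : Pt n → ℝ} (hf : ContDiff ℝ (⊤ : ℕ∞) f) (v w : Pt n) (p : Pt n) :
    Dd v (Dd w f) p = Dd w (Dd v f) p := by
  have hd : Differentiable ℝ f := hf.differentiable (by simp)
  have hd' : Differentiable ℝ (fderiv ℝ f) :=
    (hf.fderiv_right (m := (⊤ : ℕ∞)) (by simp)).differentiable (by simp)
  have hsym := second_derivative_symmetric (f' := fderiv ℝ f)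
      (f'' := fderiv ℝ (fderiv ℝ f) p) (fun y => (hd y).hasFDerivAt)
      ((hd' p).hasFDerivAt) v w
  have e : ∀ u z : Pt n, Dd u (Dd z f) p = fderiv ℝ (fderiv ℝ f) p u z := by
    intro u z
    have h1 : fderiv ℝ (fun q => (fderiv ℝ f q) z) p =
        ((fderiv ℝ f p).comp (fderiv ℝ (fun _ : Pt n => z) p)) +
          (fderiv ℝ (fderiv ℝ f) p).flip z :=
      fderiv_clm_apply (hd' p) (differentiableAt_const z)
    have h2 : Dd z f = fun q => (fderiv ℝ f q) z := rfl
    simp only [Dd, h2]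
    rw [h1]
    simp
  rw [e v w, e w v, hsym]

lemma Dd_mul {n : ℕ} {f g : Pt n → ℝ} (hf : Differentiable ℝ f) (hg : Differentiable ℝ g)
    (v : Pt n) (p : Pt n) :
    Dd v (fun q => f q * g q) p = f p * Dd v g p + g p * Dd v f p := by
  simp only [Dd]
  rw [fderiv_fun_mul (hf p) (hg p)]
  simp

lemma Dd_pow {n : ℕ} {f : Pt n → ℝ} (hf : Differentiable ℝ f) (v : Pt n) (p : Pt n) :
    ∀ m : ℕ, Dd v (fun q => f q ^ (m + 1)) p = (m + 1 : ℝ) * f p ^ m * Dd v f p := by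
  intro m
  induction m with
  | zero => simp [Dd]
  | succ m ih =>
    have : (fun q => f q ^ (m + 2)) = fun q => f q * f q ^ (m + 1) := by
      funext q; ring
    rw [this, Dd_mul (g := fun q => f q ^ (m + 1)) hf (hf.pow _) v p, ih]
    push_cast
    ring

lemma pyIter_contDiff {n : ℕ} {f : Pt n → ℝ} (hf : ContDiff ℝ (⊤ : ℕ∞) f) :
    ∀ l : List (Fin n), ContDiff ℝ (⊤ : ℕ∞) (pyIter l f) := by
  intro l
  induction l with
  | nil => exact hf
  | cons k l ih =>
    show ContDiff ℝ (⊤ : ℕ∞) (py (pyIter l f) k)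
    rw [py_eq_Dd]
    exact Dd_contDiff ih _

lemma Dd_pyIter_swap {n : ℕ} {f : Pt n → ℝ} (hf : ContDiff ℝ (⊤ : ℕ∞) f) (v : Pt n) :
    ∀ l : List (Fin n), Dd v (pyIter l f) = pyIter l (Dd v f) := by
  intro l
  induction l with
  | nil => rfl
  | cons k l ih =>
    show Dd v (py (pyIter l f) k) = py (pyIter l (Dd v f)) k
    rw [py_eq_Dd, py_eq_Dd]
    funext p
    rw [Dd_swap (pyIter_contDiff hf l) v _ p, ih]

lemma key_step {n : ℕ} (P Q : Pt n → ℝ)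
    (hP : ContDiff ℝ (⊤ : ℕ∞) P) (hQ : ContDiff ℝ (⊤ : ℕ∞) Q)
    (hF : ∀ (k : Fin n) (p : Pt n), px P k p = P p * py P k p)
    (hQF : ∀ (k : Fin n) (p : Pt n), px Q k p = py (fun q => P q * Q q) k p)
    (k : Fin n) (m : ℕ) :
    px (fun q => Q q * P q ^ m) k = py (fun q => Q q * P q ^ (m + 1)) k := by
  have hPd : Differentiable ℝ P := hP.differentiable (by simp)
  have hQd : Differentiable ℝ Q := hQ.differentiable (by simp)
  -- expansion of px Q
  have hpxQ : ∀ p, px Q k p = P p * py Q k p + Q p * py P k p := by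
    intro p
    rw [hQF k p, py_eq_Dd, Dd_mul hPd hQd, ← py_eq_Dd, ← py_eq_Dd]
  cases m with
  | zero =>
    have e1 : (fun q => Q q * P q ^ 0) = Q := by funext q; simp
    have e2 : (fun q => Q q * P q ^ (0 + 1)) = fun q => P q * Q q := by
      funext q; rw [pow_one, mul_comm]
    rw [e1, e2]
    funext p
    exact hQF k p
  | succ m =>
    funext p
    rw [px_eq_Dd, py_eq_Dd,
      Dd_mul (g := fun q => P q ^ (m + 1)) hQd (hPd.pow _) _ p,
      Dd_mul (g := fun q => P q ^ (m + 1 + 1)) hQd (hPd.pow _) _ p,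
      Dd_pow hPd _ p m, Dd_pow hPd _ p (m + 1),
      ← px_eq_Dd, ← py_eq_Dd, ← px_eq_Dd, ← py_eq_Dd, hpxQ p, hF k p]
    push_cast
    ring

theorem funk_iterated_derivatives_Q {n : ℕ} (P Q : Pt n → ℝ)
    (hP : ContDiff ℝ (⊤ : ℕ∞) P) (hQ : ContDiff ℝ (⊤ : ℕ∞) Q)
    (hF : ∀ (k : Fin n) (p : Pt n), px P k p = P p * py P k p)
    (hQF : ∀ (k : Fin n) (p : Pt n), px Q k p = py (fun q => P q * Q q) k p)
    (l : List (Fin n)) (hl : l ≠ []) (p : Pt n) :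
    pxIter l Q p = pyIter l (fun q => Q q * P q ^ l.length) p := by
  have main : ∀ l : List (Fin n), l ≠ [] →
      pxIter l Q = pyIter l (fun q => Q q * P q ^ l.length) := by
    intro l
    induction l with
    | nil => intro h; exact absurd rfl h
    | cons k l ih =>
      intro _
      rcases eq_or_ne l [] with rfl | hlne
      · show px Q k = py (fun q => Q q * P q ^ 1) k
        have e : (fun q => Q q * P q ^ 1) = fun q => P q * Q q := by
          funext q; rw [pow_one, mul_comm]
        rw [e]
        funext q
        exact hQF k q
      · show px (pxIter l Q) k = pyIter (k :: l) (fun q => Q q * P q ^ (l.length + 1))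
        rw [ih hlne]
        have hsm : ContDiff ℝ (⊤ : ℕ∞) (fun q => Q q * P q ^ l.length) := hQ.mul (hP.pow _)
        have hsm' : ContDiff ℝ (⊤ : ℕ∞) (fun q => Q q * P q ^ (l.length + 1)) := hQ.mul (hP.pow _)
        rw [px_eq_Dd, Dd_pyIter_swap hsm _ l, ← px_eq_Dd,
          key_step P Q hP hQ hF hQF k l.length, py_eq_Dd,
          ← Dd_pyIter_swap hsm' _ l, ← py_eq_Dd]
        rfl
  rw [main l hl]
end
end

section
/- The pair P = −⟨x,y⟩/(1+|x|²), Q = √((1+|x|²)|y|² − ⟨x,y⟩²)/(1+|x|²) satisfies, for the trivial spray G = 0 on R^n: Q_{x^k} = (PQ)_{y^k} and P_{x^k} = P P_{y^k} − Q Q_{y^k} for all k. Equivalently, H = P + iQ satisfies H_{x^k} = H H_{y^k}. -/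
set_option maxHeartbeats 1000000


open scoped BigOperators

noncomputable section

theorem complex_funk_example {n : ℕ} (P Q : Pt n → ℝ)
    (hP : P = fun p => -(∑ i, p.1 i * p.2 i) / (1 + ∑ i, p.1 i ^ 2))
    (hQ : Q = fun p =>
      Real.sqrt ((1 + ∑ i, p.1 i ^ 2) * (∑ i, p.2 i ^ 2) - (∑ i, p.1 i * p.2 i) ^ 2)
        / (1 + ∑ i, p.1 i ^ 2)) :
    ∀ p : Pt n, p.2 ≠ 0 → ∀ k : Fin n,
      px Q k p = py (fun q => P q * Q q) k p ∧
        px P k p = P p * py P k p - Q p * py Q k p := by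
  subst hP hQ
  intro p hy0 k
  have ha : (0:ℝ) < 1 + ∑ i, p.1 i ^ 2 := by positivity
  have hc : (0:ℝ) < ∑ i, p.2 i ^ 2 := by
    obtain ⟨i, hi⟩ := Function.ne_iff.mp hy0
    exact Finset.sum_pos' (fun j _ => sq_nonneg _) ⟨i, Finset.mem_univ i, sq_pos_iff.mpr hi⟩
  have hcs := Finset.sum_mul_sq_le_sq_mul_sq Finset.univ p.1 p.2
  have hR : (0:ℝ) < (1 + ∑ i, p.1 i ^ 2) * (∑ i, p.2 i ^ 2) - (∑ i, p.1 i * p.2 i) ^ 2 := by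
    nlinarith
  set Lx : Fin n → (Pt n →L[ℝ] ℝ) := fun i =>
    (ContinuousLinearMap.proj i).comp (ContinuousLinearMap.fst ℝ (Fin n → ℝ) (Fin n → ℝ)) with hLx
  set Ly : Fin n → (Pt n →L[ℝ] ℝ) := fun i =>
    (ContinuousLinearMap.proj i).comp (ContinuousLinearMap.snd ℝ (Fin n → ℝ) (Fin n → ℝ)) with hLy
  have hx : ∀ i, HasFDerivAt (fun q : Pt n => q.1 i) (Lx i) p := fun i => (Lx i).hasFDerivAt
  have hyd : ∀ i, HasFDerivAt (fun q : Pt n => q.2 i) (Ly i) p := fun i => (Ly i).hasFDerivAt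
  have hA : HasFDerivAt (fun q : Pt n => 1 + ∑ i, q.1 i ^ 2)
      (∑ i, (p.1 i • Lx i + p.1 i • Lx i)) p := by
    have h := HasFDerivAt.const_add (1:ℝ)
      (HasFDerivAt.fun_sum (fun i (_ : i ∈ Finset.univ) => (hx i).fun_mul (hx i)))
    simpa only [← pow_two] using h
  have hB : HasFDerivAt (fun q : Pt n => ∑ i, q.1 i * q.2 i)
      (∑ i, (p.1 i • Ly i + p.2 i • Lx i)) p :=
    HasFDerivAt.fun_sum (fun i (_ : i ∈ Finset.univ) => (hx i).fun_mul (hyd i))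
  have hC : HasFDerivAt (fun q : Pt n => ∑ i, q.2 i ^ 2)
      (∑ i, (p.2 i • Ly i + p.2 i • Ly i)) p := by
    have h := HasFDerivAt.fun_sum (fun i (_ : i ∈ Finset.univ) => (hyd i).fun_mul (hyd i))
    simpa only [← pow_two] using h
  have hRd : HasFDerivAt (fun q : Pt n =>
      (1 + ∑ i, q.1 i ^ 2) * (∑ i, q.2 i ^ 2) - (∑ i, q.1 i * q.2 i) ^ 2)
      ((1 + ∑ i, p.1 i ^ 2) • (∑ i, (p.2 i • Ly i + p.2 i • Ly i))
        + (∑ i, p.2 i ^ 2) • (∑ i, (p.1 i • Lx i + p.1 i • Lx i))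
        - ((∑ i, p.1 i * p.2 i) • (∑ i, (p.1 i • Ly i + p.2 i • Lx i))
          + (∑ i, p.1 i * p.2 i) • (∑ i, (p.1 i • Ly i + p.2 i • Lx i)))) p := by
    have h2 : HasFDerivAt (fun q : Pt n => (∑ i, q.1 i * q.2 i) ^ 2)
        ((∑ i, p.1 i * p.2 i) • (∑ i, (p.1 i • Ly i + p.2 i • Lx i))
          + (∑ i, p.1 i * p.2 i) • (∑ i, (p.1 i • Ly i + p.2 i • Lx i))) p := by
      simpa only [← pow_two] using hB.fun_mul hB
    exact (hA.mul hC).sub h2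
  set DR : Pt n →L[ℝ] ℝ :=
      (1 + ∑ i, p.1 i ^ 2) • (∑ i, (p.2 i • Ly i + p.2 i • Ly i))
        + (∑ i, p.2 i ^ 2) • (∑ i, (p.1 i • Lx i + p.1 i • Lx i))
        - ((∑ i, p.1 i * p.2 i) • (∑ i, (p.1 i • Ly i + p.2 i • Lx i))
          + (∑ i, p.1 i * p.2 i) • (∑ i, (p.1 i • Ly i + p.2 i • Lx i))) with hDRdef
  set DA : Pt n →L[ℝ] ℝ := ∑ i, (p.1 i • Lx i + p.1 i • Lx i) with hDAdef
  set DB : Pt n →L[ℝ] ℝ := ∑ i, (p.1 i • Ly i + p.2 i • Lx i) with hDBdef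
  have hSd : HasFDerivAt (fun q : Pt n =>
      Real.sqrt ((1 + ∑ i, q.1 i ^ 2) * (∑ i, q.2 i ^ 2) - (∑ i, q.1 i * q.2 i) ^ 2))
      ((1 / (2 * Real.sqrt ((1 + ∑ i, p.1 i ^ 2) * (∑ i, p.2 i ^ 2)
        - (∑ i, p.1 i * p.2 i) ^ 2))) • DR) p :=
    (Real.hasDerivAt_sqrt hR.ne').comp_hasFDerivAt p hRd
  have hAinv : HasFDerivAt (fun q : Pt n => (1 + ∑ i, q.1 i ^ 2)⁻¹)
      ((-((1 + ∑ i, p.1 i ^ 2) ^ 2)⁻¹) • DA) p :=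
    (hasDerivAt_inv ha.ne').comp_hasFDerivAt p hA
  have hPd : HasFDerivAt (fun q : Pt n =>
      -(∑ i, q.1 i * q.2 i) / (1 + ∑ i, q.1 i ^ 2))
      ((-(∑ i, p.1 i * p.2 i)) • ((-((1 + ∑ i, p.1 i ^ 2) ^ 2)⁻¹) • DA)
        + (1 + ∑ i, p.1 i ^ 2)⁻¹ • (-DB)) p := by
    have h := (hB.fun_neg).fun_mul hAinv
    simpa only [div_eq_mul_inv] using h
  have hQd : HasFDerivAt (fun q : Pt n =>
      Real.sqrt ((1 + ∑ i, q.1 i ^ 2) * (∑ i, q.2 i ^ 2) - (∑ i, q.1 i * q.2 i) ^ 2)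
        / (1 + ∑ i, q.1 i ^ 2))
      ((Real.sqrt ((1 + ∑ i, p.1 i ^ 2) * (∑ i, p.2 i ^ 2) - (∑ i, p.1 i * p.2 i) ^ 2))
          • ((-((1 + ∑ i, p.1 i ^ 2) ^ 2)⁻¹) • DA)
        + (1 + ∑ i, p.1 i ^ 2)⁻¹ • ((1 / (2 * Real.sqrt ((1 + ∑ i, p.1 i ^ 2) * (∑ i, p.2 i ^ 2)
            - (∑ i, p.1 i * p.2 i) ^ 2))) • DR)) p := by
    have h := hSd.fun_mul hAinv
    simpa only [div_eq_mul_inv] using h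
  have hPQd := hPd.fun_mul hQd
  constructor
  · simp only [px, py]
    rw [hQd.fderiv, hPQd.fderiv]
    simp only [hLx, hLy, hDRdef, hDAdef, hDBdef, ContinuousLinearMap.add_apply,
      ContinuousLinearMap.smul_apply, ContinuousLinearMap.coe_sub', Pi.sub_apply,
      ContinuousLinearMap.neg_apply, ContinuousLinearMap.sum_apply,
      ContinuousLinearMap.comp_apply, ContinuousLinearMap.proj_apply,
      ContinuousLinearMap.coe_fst', ContinuousLinearMap.coe_snd', smul_eq_mul,
      Pi.single_apply, Pi.zero_apply, mul_ite, mul_one, mul_zero, ite_mul, zero_mul,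
      Finset.sum_ite_eq', Finset.mem_univ, if_true, add_zero, zero_add,
      Finset.sum_add_distrib, Finset.sum_const_zero]
    clear hPQd hQd hPd hSd hAinv hRd hA hB hC hx hyd hcs
    clear_value DR DA DB Lx Ly
    clear hDRdef hDAdef hDBdef hLx hLy DR DA DB Lx Ly
    set b := ∑ i, p.1 i * p.2 i with hbd
    set c := ∑ i, p.2 i ^ 2 with hcd
    set a := 1 + ∑ i, p.1 i ^ 2 with had
    set s := Real.sqrt (a * c - b ^ 2) with hsd
    have hs2 : s ^ 2 = a * c - b ^ 2 := Real.sq_sqrt hR.le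
    have hsne : s ≠ 0 := (Real.sqrt_pos.mpr hR).ne'
    have hane : a ≠ 0 := ha.ne'
    have hc' : c = (s ^ 2 + b ^ 2) / a := by rw [hs2]; field_simp; ring
    rw [hc']
    field_simp
    ring
  · simp only [px, py]
    rw [hPd.fderiv, hQd.fderiv]
    simp only [hLx, hLy, hDRdef, hDAdef, hDBdef, ContinuousLinearMap.add_apply,
      ContinuousLinearMap.smul_apply, ContinuousLinearMap.coe_sub', Pi.sub_apply,
      ContinuousLinearMap.neg_apply, ContinuousLinearMap.sum_apply,
      ContinuousLinearMap.comp_apply, ContinuousLinearMap.proj_apply,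
      ContinuousLinearMap.coe_fst', ContinuousLinearMap.coe_snd', smul_eq_mul,
      Pi.single_apply, Pi.zero_apply, mul_ite, mul_one, mul_zero, ite_mul, zero_mul,
      Finset.sum_ite_eq', Finset.mem_univ, if_true, add_zero, zero_add,
      Finset.sum_add_distrib, Finset.sum_const_zero]
    clear hPQd hQd hPd hSd hAinv hRd hA hB hC hx hyd hcs
    clear_value DR DA DB Lx Ly
    clear hDRdef hDAdef hDBdef hLx hLy DR DA DB Lx Ly
    set b := ∑ i, p.1 i * p.2 i with hbd
    set c := ∑ i, p.2 i ^ 2 with hcd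
    set a := 1 + ∑ i, p.1 i ^ 2 with had
    set s := Real.sqrt (a * c - b ^ 2) with hsd
    have hs2 : s ^ 2 = a * c - b ^ 2 := Real.sq_sqrt hR.le
    have hsne : s ≠ 0 := (Real.sqrt_pos.mpr hR).ne'
    have hane : a ≠ 0 := ha.ne'
    field_simp
    ring
end
end

section
/- If two projectively related sprays G̅^i = G^i + P y^i share a common nonzero Funk function Q, then P·Q = 0; hence if Q ≠ 0 everywhere, the two sprays are equal (P = 0). -/
open scoped BigOperators

noncomputable section

section Aux
variable {n : ℕ}

/-- Euler's identity for positively `d`-homogeneous functions. -/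
lemma euler_deg (d : ℕ) (f : Pt n → ℝ) (p : Pt n) (hf : DifferentiableAt ℝ f p)
    (hh : ∀ t : ℝ, 0 < t → f (p.1, t • p.2) = t ^ d * f p) :
    fderiv ℝ f p (0, p.2) = d * f p := by
  have hγ : HasDerivAt (fun t : ℝ => ((p.1, t • p.2) : Pt n)) ((0 : Fin n → ℝ), p.2) 1 := by
    have h2 : HasDerivAt (fun t : ℝ => t • p.2) ((1:ℝ) • p.2) 1 :=
      (hasDerivAt_id 1).smul_const p.2
    simpa using HasDerivAt.prodMk (hasDerivAt_const (1:ℝ) p.1) h2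
  have hcomp : HasDerivAt (fun t : ℝ => f (p.1, t • p.2)) (fderiv ℝ f p (0, p.2)) 1 := by
    have hp : ((p.1, (1:ℝ) • p.2) : Pt n) = p := by simp
    have hf' : HasFDerivAt f (fderiv ℝ f p) ((p.1, (1:ℝ) • p.2)) := by
      rw [hp]; exact hf.hasFDerivAt
    exact hf'.comp_hasDerivAt 1 hγ
  have hright : HasDerivAt (fun t : ℝ => t ^ d * f p) ((d : ℝ) * f p) 1 := by
    simpa using (hasDerivAt_pow d (1:ℝ)).mul_const (f p)
  have heq : (fun t : ℝ => f (p.1, t • p.2)) =ᶠ[nhds 1] fun t => t ^ d * f p := by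
    filter_upwards [isOpen_Ioi.eventually_mem (show (1:ℝ) ∈ Set.Ioi 0 by norm_num)]
      with t ht using hh t ht
  exact (hcomp.congr_of_eventuallyEq heq.symm).unique hright

lemma sum_y_py (f : Pt n → ℝ) (p : Pt n) :
    ∑ k, p.2 k * py f k p = fderiv ℝ f p (0, p.2) := by
  have hv : ((0 : Fin n → ℝ), p.2)
      = ∑ k, p.2 k • (((0 : Fin n → ℝ), Pi.single k 1) : Pt n) := by
    refine Prod.ext ?_ ?_
    · simp [Prod.fst_sum]
    · ext i
      simp [Prod.snd_sum, Finset.sum_apply, Pi.single_apply, smul_eq_mul,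
        mul_ite, Finset.sum_ite_eq, Finset.sum_ite_eq']
  rw [hv, map_sum]
  refine Finset.sum_congr rfl fun x _ => ?_
  rw [map_smul, smul_eq_mul, py]

lemma py_mul (f g : Pt n → ℝ) (p : Pt n) (hf : DifferentiableAt ℝ f p)
    (hg : DifferentiableAt ℝ g p) (k : Fin n) :
    py (fun q => f q * g q) k p = py f k p * g p + f p * py g k p := by
  unfold py
  rw [fderiv_fun_mul hf hg]
  simp only [ContinuousLinearMap.add_apply, ContinuousLinearMap.coe_smul',
    Pi.smul_apply, smul_eq_mul]
  ring

lemma py_proj (r k : Fin n) (p : Pt n) :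
    py (fun q : Pt n => q.2 r) k p = (Pi.single k 1 : Fin n → ℝ) r := by
  have : HasFDerivAt (fun q : Pt n => q.2 r)
      ((ContinuousLinearMap.proj r).comp (ContinuousLinearMap.snd ℝ (Fin n → ℝ) (Fin n → ℝ))) p :=
    ((ContinuousLinearMap.proj r).comp
      (ContinuousLinearMap.snd ℝ (Fin n → ℝ) (Fin n → ℝ))).hasFDerivAt
  rw [py, this.fderiv]
  simp

end Aux

/-- Two projectively related sprays with a common nonzero Funk function coincide. -/
theorem common_funk_function {n : ℕ} (G : Fin n → Pt n → ℝ) (P Q : Pt n → ℝ)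
    (hG : IsSpray G) (hPs : ContDiff ℝ (⊤ : ℕ∞) P) (hQs : ContDiff ℝ (⊤ : ℕ∞) Q)
    (h1P : Homog1 P) (h1Q : Homog1 Q)
    (Gb : Fin n → Pt n → ℝ) (hGb : Gb = fun r p => G r p + P p * p.2 r)
    (hF : IsFunk G Q) (hFb : IsFunk Gb Q) :
    (∀ p : Pt n, P p * Q p = 0) ∧
      ((∀ p : Pt n, Q p ≠ 0) → ∀ p : Pt n, P p = 0) := by
  have hPd : Differentiable ℝ P := hPs.differentiable (by simp)
  have hQd : Differentiable ℝ Q := hQs.differentiable (by simp)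
  have key : ∀ p : Pt n, P p * Q p = 0 := by
    intro p
    have hpy0 : ∀ k : Fin n, py P k p * Q p + P p * py Q k p = 0 := by
      intro k
      have h1 := hF k p
      have h2 := hFb k p
      have hGbexp : ∀ r : Fin n, py (Gb r) k p
          = py (G r) k p + (py P k p * p.2 r + P p * (Pi.single k 1 : Fin n → ℝ) r) := by
        intro r
        have hdiffG : DifferentiableAt ℝ (G r) p := (hG.1 r).differentiable (by simp) p
        have hdsnd : DifferentiableAt ℝ (fun q : Pt n => q.2 r) p :=
          (((ContinuousLinearMap.proj r).comp
            (ContinuousLinearMap.snd ℝ (Fin n → ℝ) (Fin n → ℝ))).differentiable).differentiableAt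
        have hdiffPy : DifferentiableAt ℝ (fun q : Pt n => P q * q.2 r) p :=
          (hPd p).mul hdsnd
        have hrw : py (Gb r) k p = py (fun q => G r q + P q * q.2 r) k p := by rw [hGb]
        rw [hrw, py, fderiv_fun_add hdiffG hdiffPy]
        have hm := py_mul P (fun q : Pt n => q.2 r) p (hPd p) hdsnd k
        rw [py_proj] at hm
        simp only [ContinuousLinearMap.add_apply]
        rw [show (fderiv ℝ (fun q : Pt n => P q * q.2 r) p) (0, Pi.single k 1)
            = py (fun q : Pt n => P q * q.2 r) k p from rfl, hm]
        rfl
      have e1 : ∑ r, py P k p * p.2 r * py Q r p = py P k p * Q p := by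
        have : ∑ r, py P k p * p.2 r * py Q r p
            = py P k p * ∑ r, p.2 r * py Q r p := by
          rw [Finset.mul_sum]; exact Finset.sum_congr rfl fun r _ => by ring
        rw [this, sum_y_py Q p]
        have := euler_deg 1 Q p (hQd p) (by intro t ht; simpa using h1Q t ht p)
        rw [this]; ring
      have e2 : ∑ r, P p * (Pi.single k 1 : Fin n → ℝ) r * py Q r p = P p * py Q k p := by
        have hcongr : ∀ r ∈ Finset.univ, P p * (Pi.single k 1 : Fin n → ℝ) r * py Q r p
            = if r = k then P p * py Q r p else 0 := by
          intro r _
          rcases eq_or_ne r k with h | h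
          · subst h; simp
          · simp [Pi.single_apply, Ne.symm h, h]
        rw [Finset.sum_congr rfl hcongr, Finset.sum_ite_eq']
        simp
      have hsum : ∑ r, py (Gb r) k p * py Q r p
          = ∑ r, py (G r) k p * py Q r p + py P k p * Q p + P p * py Q k p := by
        calc ∑ r, py (Gb r) k p * py Q r p
            = ∑ r, (py (G r) k p * py Q r p
                + (py P k p * p.2 r * py Q r p + P p * (Pi.single k 1 : Fin n → ℝ) r * py Q r p)) := by
              refine Finset.sum_congr rfl fun r _ => ?_
              rw [hGbexp r]; ring
          _ = ∑ r, py (G r) k p * py Q r p + (∑ r, py P k p * p.2 r * py Q r p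
                + ∑ r, P p * (Pi.single k 1 : Fin n → ℝ) r * py Q r p) := by
              rw [Finset.sum_add_distrib, Finset.sum_add_distrib]
          _ = _ := by rw [e1, e2]; ring
      unfold hderiv at h1 h2
      rw [hsum] at h2
      linarith
    have hPQd : DifferentiableAt ℝ (fun q => P q * Q q) p := (hPd p).mul (hQd p)
    have heul := euler_deg 2 (fun q => P q * Q q) p hPQd
      (by intro t ht; rw [h1P t ht p, h1Q t ht p]; ring)
    rw [← sum_y_py] at heul
    have hz : ∀ k : Fin n, py (fun q => P q * Q q) k p = 0 := by
      intro k
      rw [py_mul P Q p (hPd p) (hQd p) k]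
      exact hpy0 k
    simp only [hz, mul_zero, Finset.sum_const_zero] at heul
    push_cast at heul
    linarith [heul]
  refine ⟨key, fun hQ p => ?_⟩
  exact (mul_eq_zero.mp (key p)).resolve_right (hQ p)
end
end

section
/- Let σ(x) be a scalar function on a domain in R^n and f : R → R smooth; define the spray G^i := f'(σ)σ_0 y^i with σ_0 := σ_{x^m} y^m. Then Q := σ_0 is a Funk function of G (Q_{;j} = Q Q_{y^j}) if and only if σ_{ij} = (1 + 2f'(σ)) σ_i σ_j for all i,j, where σ_i := σ_{x^i}, σ_{ij} := σ_{x^i x^j}. -/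
open scoped BigOperators

noncomputable section

/-- First partial derivative of a function of x alone. -/
noncomputable def pd {n : ℕ} (σ : (Fin n → ℝ) → ℝ) (i : Fin n) (x : Fin n → ℝ) : ℝ :=
  fderiv ℝ σ x (Pi.single i 1)

/-- Second partial derivative of a function of x alone. -/
noncomputable def pd2 {n : ℕ} (σ : (Fin n → ℝ) → ℝ) (i j : Fin n) (x : Fin n → ℝ) : ℝ :=
  fderiv ℝ (fun z => pd σ i z) x (Pi.single j 1)

/- ### Auxiliary lemmas -/

lemma pd_contDiff {n : ℕ} {σ : (Fin n → ℝ) → ℝ} (hσ : ContDiff ℝ (⊤ : ℕ∞) σ) (m : Fin n) :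
    ContDiff ℝ (⊤ : ℕ∞) (pd σ m) :=
  (hσ.fderiv_right (by simp)).clm_apply contDiff_const

lemma deriv_contDiff' {f : ℝ → ℝ} (hf : ContDiff ℝ (⊤ : ℕ∞) f) : ContDiff ℝ (⊤ : ℕ∞) (deriv f) := by
  have h : deriv f = fun x => fderiv ℝ f x 1 := by
    funext x; exact (fderiv_apply_one_eq_deriv).symm
  rw [h]; exact (hf.fderiv_right (by simp)).clm_apply contDiff_const

variable {n : ℕ} {σ : (Fin n → ℝ) → ℝ}

noncomputable def DQ (σ : (Fin n → ℝ) → ℝ) (p : Pt n) : Pt n →L[ℝ] ℝ :=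
  ∑ m, ((pd σ m p.1) • ((ContinuousLinearMap.proj m).comp
          (ContinuousLinearMap.snd ℝ (Fin n → ℝ) (Fin n → ℝ)))
       + (p.2 m) • ((fderiv ℝ (pd σ m) p.1).comp
          (ContinuousLinearMap.fst ℝ (Fin n → ℝ) (Fin n → ℝ))))

lemma hasFDerivAt_Q (hσ : ContDiff ℝ (⊤ : ℕ∞) σ) (p : Pt n) :
    HasFDerivAt (fun q : Pt n => ∑ m, pd σ m q.1 * q.2 m) (DQ σ p) p := by
  apply HasFDerivAt.fun_sum
  intro m _
  have h1 : HasFDerivAt (fun q : Pt n => pd σ m q.1)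
      ((fderiv ℝ (pd σ m) p.1).comp (ContinuousLinearMap.fst ℝ (Fin n → ℝ) (Fin n → ℝ))) p :=
    (((pd_contDiff hσ m).differentiable (by simp) p.1).hasFDerivAt).comp p (hasFDerivAt_fst)
  have h2 : HasFDerivAt (fun q : Pt n => q.2 m)
      ((ContinuousLinearMap.proj m).comp (ContinuousLinearMap.snd ℝ (Fin n → ℝ) (Fin n → ℝ))) p :=
    ((ContinuousLinearMap.proj m).comp
      (ContinuousLinearMap.snd ℝ (Fin n → ℝ) (Fin n → ℝ))).hasFDerivAt
  exact h1.mul h2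

lemma DQ_apply_x (p : Pt n) (k : Fin n) :
    DQ σ p (Pi.single k 1, 0) = ∑ m, p.2 m * pd2 σ m k p.1 := by
  simp [DQ, pd2, ContinuousLinearMap.sum_apply]

lemma DQ_apply_y (p : Pt n) (r : Fin n) :
    DQ σ p (0, Pi.single r 1) = pd σ r p.1 := by
  simp [DQ, ContinuousLinearMap.sum_apply, Pi.single_apply]

lemma Qpx (hσ : ContDiff ℝ (⊤ : ℕ∞) σ) (p : Pt n) (k : Fin n) :
    px (fun q : Pt n => ∑ m, pd σ m q.1 * q.2 m) k p = ∑ m, p.2 m * pd2 σ m k p.1 := by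
  rw [px, (hasFDerivAt_Q hσ p).fderiv, DQ_apply_x]

lemma Qpy (hσ : ContDiff ℝ (⊤ : ℕ∞) σ) (p : Pt n) (r : Fin n) :
    py (fun q : Pt n => ∑ m, pd σ m q.1 * q.2 m) r p = pd σ r p.1 := by
  rw [py, (hasFDerivAt_Q hσ p).fderiv, DQ_apply_y]

noncomputable def DG (σ : (Fin n → ℝ) → ℝ) (f : ℝ → ℝ) (r : Fin n) (p : Pt n) : Pt n →L[ℝ] ℝ :=
  (deriv f (σ p.1) * (∑ m, pd σ m p.1 * p.2 m)) •
      ((ContinuousLinearMap.proj r).comp (ContinuousLinearMap.snd ℝ (Fin n → ℝ) (Fin n → ℝ)))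
    + (p.2 r) • ((deriv f (σ p.1)) • DQ σ p
        + (∑ m, pd σ m p.1 * p.2 m) •
          ((fderiv ℝ (fun x => deriv f (σ x)) p.1).comp
            (ContinuousLinearMap.fst ℝ (Fin n → ℝ) (Fin n → ℝ))))

lemma hasFDerivAt_G (hσ : ContDiff ℝ (⊤ : ℕ∞) σ) {f : ℝ → ℝ} (hf : ContDiff ℝ (⊤ : ℕ∞) f)
    (r : Fin n) (p : Pt n) :
    HasFDerivAt (fun q : Pt n => deriv f (σ q.1) * (∑ m, pd σ m q.1 * q.2 m) * q.2 r)
      (DG σ f r p) p := by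
  have hc : HasFDerivAt (fun q : Pt n => deriv f (σ q.1))
      ((fderiv ℝ (fun x => deriv f (σ x)) p.1).comp
        (ContinuousLinearMap.fst ℝ (Fin n → ℝ) (Fin n → ℝ))) p :=
    ((((deriv_contDiff' hf).comp hσ).differentiable (by simp) p.1).hasFDerivAt).comp p
      hasFDerivAt_fst
  have hyr : HasFDerivAt (fun q : Pt n => q.2 r)
      ((ContinuousLinearMap.proj r).comp (ContinuousLinearMap.snd ℝ (Fin n → ℝ) (Fin n → ℝ))) p :=
    ((ContinuousLinearMap.proj r).comp
      (ContinuousLinearMap.snd ℝ (Fin n → ℝ) (Fin n → ℝ))).hasFDerivAt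
  exact (hc.mul (hasFDerivAt_Q hσ p)).mul hyr

lemma Gpy (hσ : ContDiff ℝ (⊤ : ℕ∞) σ) {f : ℝ → ℝ} (hf : ContDiff ℝ (⊤ : ℕ∞) f)
    (r j : Fin n) (p : Pt n) :
    py (fun q : Pt n => deriv f (σ q.1) * (∑ m, pd σ m q.1 * q.2 m) * q.2 r) j p
      = deriv f (σ p.1) * (∑ m, pd σ m p.1 * p.2 m) * ((Pi.single j 1 : Fin n → ℝ) r)
        + p.2 r * (deriv f (σ p.1) * pd σ j p.1) := by
  rw [py, (hasFDerivAt_G hσ hf r p).fderiv]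
  simp [DG, DQ_apply_y, mul_comm]

lemma key (hσ : ContDiff ℝ (⊤ : ℕ∞) σ) {f : ℝ → ℝ} (hf : ContDiff ℝ (⊤ : ℕ∞) f) (k : Fin n) (p : Pt n) :
    hderiv (fun r q => deriv f (σ q.1) * (∑ m, pd σ m q.1 * q.2 m) * q.2 r)
      (fun q => ∑ m, pd σ m q.1 * q.2 m) k p
    = (∑ m, p.2 m * pd2 σ m k p.1)
      - 2 * deriv f (σ p.1) * (∑ m, pd σ m p.1 * p.2 m) * pd σ k p.1 := by
  simp only [hderiv]
  rw [Qpx hσ]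
  have hterm : ∀ r, py (fun q : Pt n => deriv f (σ q.1) * (∑ m, pd σ m q.1 * q.2 m) * q.2 r) k p
      * py (fun q : Pt n => ∑ m, pd σ m q.1 * q.2 m) r p
      = (deriv f (σ p.1) * (∑ m, pd σ m p.1 * p.2 m) * (Pi.single k 1 : Fin n → ℝ) r)
          * pd σ r p.1
        + deriv f (σ p.1) * pd σ k p.1 * (pd σ r p.1 * p.2 r) := by
    intro r
    rw [Gpy hσ hf r k p, Qpy hσ p r]; ring
  rw [Finset.sum_congr rfl (fun r _ => hterm r), Finset.sum_add_distrib]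
  have h1 : ∑ r, (deriv f (σ p.1) * (∑ m, pd σ m p.1 * p.2 m) * (Pi.single k 1 : Fin n → ℝ) r)
      * pd σ r p.1 = deriv f (σ p.1) * (∑ m, pd σ m p.1 * p.2 m) * pd σ k p.1 := by
    simp [Pi.single_apply]
  have h2 : ∑ r, deriv f (σ p.1) * pd σ k p.1 * (pd σ r p.1 * p.2 r)
      = deriv f (σ p.1) * pd σ k p.1 * (∑ m, pd σ m p.1 * p.2 m) := by
    rw [← Finset.mul_sum]
  rw [h1, h2]; ring

theorem funk_closed_one_form {n : ℕ} (σ : (Fin n → ℝ) → ℝ) (f : ℝ → ℝ)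
    (hσ : ContDiff ℝ (⊤ : ℕ∞) σ) (hf : ContDiff ℝ (⊤ : ℕ∞) f)
    (G : Fin n → Pt n → ℝ) (Q : Pt n → ℝ)
    (hQ : Q = fun p => ∑ m, pd σ m p.1 * p.2 m)
    (hGdef : G = fun r p => deriv f (σ p.1) * (∑ m, pd σ m p.1 * p.2 m) * p.2 r) :
    IsFunk G Q ↔
      ∀ (i j : Fin n) (x : Fin n → ℝ),
        pd2 σ i j x = (1 + 2 * deriv f (σ x)) * pd σ i x * pd σ j x := by
  subst hQ hGdef
  constructor
  · intro hfunk i j x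
    have h := hfunk j (x, Pi.single i 1)
    rw [key hσ hf, Qpy hσ] at h
    simp only [Pi.single_apply] at h
    simp [Finset.mul_sum, mul_ite, ite_mul, Finset.sum_ite_eq, Finset.sum_ite_eq'] at h
    linear_combination h
  · intro hcond k p
    rw [key hσ hf, Qpy hσ]
    have hs : ∑ m, p.2 m * pd2 σ m k p.1
        = (1 + 2 * deriv f (σ p.1)) * pd σ k p.1 * (∑ m, pd σ m p.1 * p.2 m) := by
      rw [Finset.mul_sum]
      refine Finset.sum_congr rfl fun m _ => ?_
      rw [hcond m k p.1]; ring
    show (∑ m, p.2 m * pd2 σ m k p.1)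
        - 2 * deriv f (σ p.1) * (∑ m, pd σ m p.1 * p.2 m) * pd σ k p.1
      = (∑ m, pd σ m p.1 * p.2 m) * pd σ k p.1
    rw [hs]; ring
end
end
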